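/- arXiv:1002.2230 — 3 statements merged into one kernel-verified Lean document; each statement's English description precedes it below -/
import Mathlib

section
/- Let g = (g_1,...,g_m) be polynomials with homogenizations g_i^h, and suppose the homogenized variety V_R^h(g) = {x̃ in R^{n+1} : g^h(x̃) = 0} is closed at infinity, meaning V_R^h(g) ∩ {x_0 >= 0} equals the closure of V_R^h(g) ∩ {x_0 > 0}. For f of degree at most d, define δ_g^h(f) = min { f^h(x̃) : x̃ in V_R^h(g), ||x̃||_2 = 1, x_0 >= 0 }. Then f >= 0 on V_R(g) = {x in R^n : g(x)=0} if and only if δ_g^h(f) >= 0. -/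
/-!
Where `y₀ > 0`, homogeneity gives `F y = y₀ ^ d * f (y / y₀)` and `G y = y₀ ^ dg * g (y / y₀)`,
so `F ≥ 0` on `Vʰ ∩ {y₀ > 0}` whenever `f ≥ 0` on `V(g)`; closedness at infinity carries this to
`Vʰ ∩ {y₀ ≥ 0}`. Conversely, a point `x ∈ V(g)` lifts to `(1, x) / √(1 + ‖x‖²)` on the unit sphere
of `Vʰ ∩ {y₀ ≥ 0}`, where `F` takes the value `f x` times a positive factor; the infimum over this
compact set bounds it from below.
-/

open MvPolynomial

namespace MvPolynomial.IsHomogeneous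

variable {σ R : Type*} [CommSemiring R] {φ : MvPolynomial σ R} {k : ℕ}

theorem eval_smul (hφ : φ.IsHomogeneous k) (c : R) (x : σ → R) :
    eval (c • x) φ = c ^ k * eval x φ := by
  rw [eval_eq, eval_eq, Finset.mul_sum]
  refine Finset.sum_congr rfl fun e he => ?_
  have hdeg : ∑ i ∈ e.support, e i = k := by
    simpa [Finsupp.weight_apply, Finsupp.sum] using hφ (mem_support_iff.mp he)
  simp only [Pi.smul_apply, smul_eq_mul, mul_pow, Finset.prod_mul_distrib,
    Finset.prod_pow_eq_pow_sum, hdeg]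
  ring

theorem eval_eq_pow_mul_eval_div {K : Type*} [Field K] {n : ℕ}
    {F : MvPolynomial (Fin (n + 1)) K} {f : MvPolynomial (Fin n) K} (hF : F.IsHomogeneous k)
    (hFf : ∀ x, eval (Fin.cons 1 x) F = eval x f) {y : Fin (n + 1) → K} (hy : y 0 ≠ 0) :
    eval y F = y 0 ^ k * eval (fun i => y i.succ / y 0) f := by
  have hdecomp : y = y 0 • (Fin.cons 1 fun i => y i.succ / y 0 : Fin (n + 1) → K) := by
    ext j
    refine Fin.cases ?_ (fun i => ?_) j
    · simp
    · simp [mul_div_cancel₀ _ hy]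
  conv_lhs => rw [hdecomp]
  rw [hF.eval_smul, hFf]

end MvPolynomial.IsHomogeneous

theorem isCompact_setOf_sum_sq_eq_one (ι : Type*) [Fintype ι] :
    IsCompact {y : ι → ℝ | ∑ j, y j ^ 2 = 1} := by
  refine (isCompact_closedBall (0 : ι → ℝ) 1).of_isClosed_subset
    (isClosed_eq (by fun_prop) continuous_const) fun y hy => ?_
  rw [mem_closedBall_zero_iff, pi_norm_le_iff_of_nonneg zero_le_one]
  intro i
  rw [Real.norm_eq_abs, ← sq_le_one_iff_abs_le_one, ← Set.mem_ofPred_eq.mp hy]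
  exact Finset.single_le_sum (fun j _ => sq_nonneg (y j)) (Finset.mem_univ i)

theorem sum_sq_inv_sqrt_smul_cons_one {n : ℕ} (x : Fin n → ℝ) :
    ∑ j, ((√(1 + ∑ i, x i ^ 2))⁻¹ • (Fin.cons 1 x : Fin (n + 1) → ℝ)) j ^ 2 = 1 := by
  have hpos : 0 < 1 + ∑ i, x i ^ 2 := by positivity
  simp only [Pi.smul_apply, smul_eq_mul, mul_pow, ← Finset.mul_sum, Fin.sum_univ_succ,
    Fin.cons_zero, Fin.cons_succ, one_pow, inv_pow, Real.sq_sqrt hpos.le]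
  exact inv_mul_cancel₀ hpos.ne'

theorem isClosed_setOf_forall_eval_eq_zero {σ ι : Type*} (G : ι → MvPolynomial σ ℝ) :
    IsClosed {y : σ → ℝ | ∀ i, eval y (G i) = 0} := by
  simp only [Set.ofPred_forall]
  exact isClosed_iInter fun i => isClosed_eq (continuous_eval (G i)) continuous_const

/-- If the homogenized variety V_ℝ^h(g) is closed at infinity, then f ≥ 0 on
V_ℝ(g) iff the minimum of f^h over the part of V_ℝ^h(g) on the unit sphere with
x₀ ≥ 0 is nonnegative. -/
theorem stmt10 (n m d : ℕ) (f : MvPolynomial (Fin n) ℝ)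
    (g : Fin m → MvPolynomial (Fin n) ℝ) (dg : Fin m → ℕ)
    (F : MvPolynomial (Fin (n + 1)) ℝ) (hF : F.IsHomogeneous d)
    (hFf : ∀ x : Fin n → ℝ,
      MvPolynomial.eval (Fin.cons 1 x) F = MvPolynomial.eval x f)
    (G : Fin m → MvPolynomial (Fin (n + 1)) ℝ)
    (hG : ∀ i, (G i).IsHomogeneous (dg i))
    (hGg : ∀ i, ∀ x : Fin n → ℝ,
      MvPolynomial.eval (Fin.cons 1 x) (G i) = MvPolynomial.eval x (g i))
    (Vh : Set (Fin (n + 1) → ℝ))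
    (hVh : Vh = {y | ∀ i, MvPolynomial.eval y (G i) = 0})
    (hclosed : Vh ∩ {y | 0 ≤ y 0} = closure (Vh ∩ {y | 0 < y 0})) :
    (∀ x : Fin n → ℝ, (∀ i, MvPolynomial.eval x (g i) = 0) →
        0 ≤ MvPolynomial.eval x f) ↔
      0 ≤ sInf ((fun y => MvPolynomial.eval y F) ''
        {y | y ∈ Vh ∧ (∑ j, y j ^ 2 = 1) ∧ 0 ≤ y 0}) := by
  subst hVh
  constructor
  · intro hf
    have hpos : ∀ y ∈ {y | ∀ i, eval y (G i) = 0} ∩ {y | 0 < y 0}, 0 ≤ eval y F := by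
      rintro y ⟨hyV, hy0 : 0 < y 0⟩
      have hx : ∀ i, eval (fun j => y j.succ / y 0) (g i) = 0 := fun i => by
        have hGy := hyV i
        rw [(hG i).eval_eq_pow_mul_eval_div (hGg i) hy0.ne'] at hGy
        exact (mul_eq_zero.mp hGy).resolve_left (by positivity)
      rw [hF.eval_eq_pow_mul_eval_div hFf hy0.ne']
      exact mul_nonneg (by positivity) (hf _ hx)
    refine Real.sInf_nonneg ?_
    rintro _ ⟨y, ⟨hyV, -, hy0⟩, rfl⟩
    exact closure_minimal hpos (isClosed_le continuous_const (continuous_eval F))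
      (hclosed ▸ ⟨hyV, hy0⟩)
  · intro hinf x hx
    set c := √(1 + ∑ i, x i ^ 2)
    have hcompact : IsCompact {y | (∀ i, eval y (G i) = 0) ∧ (∑ j, y j ^ 2 = 1) ∧ 0 ≤ y 0} :=
      ((isCompact_setOf_sum_sq_eq_one _).inter_right
        (isClosed_le continuous_const (continuous_apply 0))).inter_left
        (isClosed_setOf_forall_eval_eq_zero G)
    have hmem : c⁻¹ • (Fin.cons 1 x : Fin (n + 1) → ℝ) ∈
        {y | (∀ i, eval y (G i) = 0) ∧ (∑ j, y j ^ 2 = 1) ∧ 0 ≤ y 0} :=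
      ⟨fun i => by rw [(hG i).eval_smul, hGg i, hx i, mul_zero],
        sum_sq_inv_sqrt_smul_cons_one x, by simp only [Pi.smul_apply, Fin.cons_zero]; positivity⟩
    have hscaled : 0 ≤ c⁻¹ ^ d * eval x f := by
      rw [← hFf, ← hF.eval_smul]
      exact hinf.trans (csInf_le (hcompact.image (continuous_eval F)).bddBelow ⟨_, hmem, rfl⟩)
    exact nonneg_of_mul_nonneg_right hscaled (by positivity)
end

section
/- For the polynomial g(x_1,x_2) = x_1^2(x_1 - x_2) - 1, the polynomial f(x_1,x_2) = x_1 - x_2 + 1 is strictly positive on the real variety V_R(g) = {x in R^2 : g(x) = 0}, but the homogenization f^h(x_0,x_1,x_2) = x_1 - x_2 + x_0 takes a negative value on the homogenized variety V_R^h(g) = {x̃ in R^3 : x_1^2(x_1-x_2) - x_0^3 = 0}; in particular, the point (0,0,1) lies in V_R^h(g) and f^h(0,0,1) = -1 < 0. -/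
theorem pos_of_sq_mul_eq_one {R : Type*} [Ring R] [LinearOrder R] [IsStrictOrderedRing R]
    {x t : R} (h : x ^ 2 * t = 1) : 0 < t :=
  pos_of_mul_pos_right (h ▸ one_pos) (sq_nonneg x)

/-- f = x₁ - x₂ + 1 is strictly positive on the variety x₁²(x₁-x₂) - 1 = 0,
but its homogenization x₁ - x₂ + x₀ takes a negative value on the homogenized
variety x₁²(x₁-x₂) - x₀³ = 0; in particular at the point (x₀,x₁,x₂) = (0,0,1)
it equals -1 < 0. -/
theorem stmt11 :
    (∀ x₁ x₂ : ℝ, x₁ ^ 2 * (x₁ - x₂) - 1 = 0 → 0 < x₁ - x₂ + 1) ∧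
    (∃ y : ℝ × ℝ × ℝ, y.2.1 ^ 2 * (y.2.1 - y.2.2) - y.1 ^ 3 = 0 ∧
      y.2.1 - y.2.2 + y.1 < 0) ∧
    ((0 : ℝ) ^ 2 * ((0 : ℝ) - 1) - (0 : ℝ) ^ 3 = 0 ∧
      (0 : ℝ) - 1 + 0 = -1 ∧ (-1 : ℝ) < 0) := by
  refine ⟨fun x₁ x₂ h => ?_, ⟨(0, 0, 1), by norm_num⟩, by norm_num⟩
  have hpos : 0 < x₁ - x₂ := pos_of_sq_mul_eq_one (sub_eq_zero.mp h)
  linarith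
end

section
/- Let A be a real symmetric n×n matrix such that the quadratic form x^T A x is co-positive (nonnegative on R_+^n) and vanishes at some nonzero u in R_+^n. Let I = {i : u_i > 0}. Then the principal submatrix A(I,I) is singular, i.e., det A(I,I) = 0. -/
/-!
For `i` with `u i > 0` the vectors `u + t eᵢ` stay nonnegative for small `|t|`, so
`t ↦ (u + t eᵢ)ᵀ A (u + t eᵢ) = 2 t (A u)ᵢ + t² Aᵢᵢ` has a local minimum at `0`, forcing
`(A u)ᵢ = 0`. Since `u` vanishes off `I`, the restriction of `u` to `I` is then a nonzero
kernel vector of `A(I,I)`.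
-/

open Matrix Filter Topology

namespace Matrix

variable {ι : Type*} [Fintype ι]

theorem dotProduct_mulVec_add_smul_self {R : Type*} [CommRing R] {A : Matrix ι ι R}
    (hA : A.IsSymm) (u v : ι → R) (t : R) :
    (u + t • v) ⬝ᵥ A *ᵥ (u + t • v)
      = u ⬝ᵥ A *ᵥ u + 2 * t * (v ⬝ᵥ A *ᵥ u) + t ^ 2 * (v ⬝ᵥ A *ᵥ v) := by
  have hswap : u ⬝ᵥ A *ᵥ v = v ⬝ᵥ A *ᵥ u := by
    rw [dotProduct_mulVec, ← vecMul_transpose, hA.eq, dotProduct_comm]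
  simp only [mulVec_add, mulVec_smul, dotProduct_add, add_dotProduct, dotProduct_smul,
    smul_dotProduct, smul_eq_mul, hswap]
  ring

theorem dotProduct_mulVec_eq_zero_of_eventually_nonneg {A : Matrix ι ι ℝ} (hA : A.IsSymm)
    {u : ι → ℝ} (hu : u ⬝ᵥ A *ᵥ u = 0) (v : ι → ℝ)
    (hnonneg : ∀ᶠ t in 𝓝 (0 : ℝ), 0 ≤ (u + t • v) ⬝ᵥ A *ᵥ (u + t • v)) :
    v ⬝ᵥ A *ᵥ u = 0 := by
  set b := v ⬝ᵥ A *ᵥ u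
  set a := v ⬝ᵥ A *ᵥ v
  have hloc : IsLocalMin (fun t : ℝ => 2 * t * b + t ^ 2 * a) 0 := by
    filter_upwards [hnonneg] with t ht
    simpa [dotProduct_mulVec_add_smul_self hA, hu] using ht
  have hderiv : HasDerivAt (fun t : ℝ => 2 * t * b + t ^ 2 * a) (2 * b) 0 :=
    ((((hasDerivAt_id' (0 : ℝ)).const_mul 2).mul_const b).add
      ((hasDerivAt_pow 2 (0 : ℝ)).mul_const a)).congr_deriv (by simp)
  linarith [hloc.hasDerivAt_eq_zero hderiv]

theorem mulVec_apply_eq_zero_of_copositive [DecidableEq ι] {A : Matrix ι ι ℝ} (hA : A.IsSymm)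
    (hcop : ∀ x : ι → ℝ, (∀ i, 0 ≤ x i) → 0 ≤ x ⬝ᵥ A *ᵥ x) {u : ι → ℝ} (hu : ∀ i, 0 ≤ u i)
    (huA : u ⬝ᵥ A *ᵥ u = 0) {i : ι} (hi : 0 < u i) : (A *ᵥ u) i = 0 := by
  rw [← single_one_dotProduct i (A *ᵥ u)]
  refine dotProduct_mulVec_eq_zero_of_eventually_nonneg hA huA _ ?_
  filter_upwards [Ioo_mem_nhds (neg_neg_iff_pos.2 hi) hi] with t ht
  refine hcop _ fun j => ?_
  rcases eq_or_ne j i with rfl | hj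
  · simp only [Pi.add_apply, Pi.smul_apply, Pi.single_eq_same, smul_eq_mul, mul_one]
    linarith [ht.1]
  · simpa [Pi.single_eq_of_ne hj] using hu j

theorem submatrix_mulVec_restrict {α : Type*} [NonUnitalNonAssocSemiring α] {A : Matrix ι ι α}
    {p : ι → Prop} [DecidablePred p] {u : ι → α} (hu : ∀ i, ¬ p i → u i = 0) :
    A.submatrix (fun i : Subtype p => (i : ι)) (fun i : Subtype p => (i : ι)) *ᵥ (fun i => u i)
      = fun i : Subtype p => (A *ᵥ u) i := by
  ext i
  simp only [mulVec, dotProduct, submatrix_apply]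
  rw [← Fintype.sum_subtype_add_sum_subtype p,
    Fintype.sum_eq_zero (fun j : {j // ¬ p j} => A i j * u j) fun j => by simp [hu j j.2],
    add_zero]

end Matrix

/-- If a co-positive symmetric matrix A vanishes (as a quadratic form) at a
nonzero nonnegative u, then the principal submatrix indexed by I = {i : uᵢ > 0}
is singular. -/
theorem stmt15 (n : ℕ) (A : Matrix (Fin n) (Fin n) ℝ) (hsym : A.IsSymm)
    (hcop : ∀ x : Fin n → ℝ, (∀ i, 0 ≤ x i) → 0 ≤ x ⬝ᵥ A.mulVec x)
    (u : Fin n → ℝ) (hu : ∀ i, 0 ≤ u i) (hu0 : u ≠ 0)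
    (huA : u ⬝ᵥ A.mulVec u = 0) :
    (A.submatrix (fun i : {i : Fin n // 0 < u i} => (i : Fin n))
      (fun i : {i : Fin n // 0 < u i} => (i : Fin n))).det = 0 := by
  obtain ⟨i, hi⟩ := Function.ne_iff.mp hu0
  have hipos : 0 < u i := (hu i).lt_of_ne' hi
  rw [← exists_mulVec_eq_zero_iff]
  refine ⟨fun j => u j, fun h => hi (congrFun h ⟨i, hipos⟩), ?_⟩
  rw [submatrix_mulVec_restrict fun j hj => le_antisymm (not_lt.mp hj) (hu j)]
  exact funext fun j => mulVec_apply_eq_zero_of_copositive hsym hcop hu huA j.2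
end
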